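/- The stable self-similar Burgers profile \(\overline{W}\) is smooth near 0 and its derivatives at the origin take the values \(\overline{W}(0) = 0\), \(\overline{W}'(0) = -1\), \(\overline{W}''(0) = 0\), and \(\overline{W}'''(0) = 6\), where \(\overline{W}^{(n)}\) denotes the n-th iterated derivative. -/

import Mathlib

/-!
By Cardano's formula `W̄(y)` is the real root of `w³ + w + y = 0`, i.e. `W̄` inverts the
polynomial `w ↦ -(w³ + w)`, whose derivative `-(3w² + 1)` never vanishes. Hence
`W̄' = -1 / (3W̄² + 1)`; since `W̄'` is a smooth function of `W̄`, bootstrapping gives smoothness,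
and differentiating again gives `W̄'' = -6W̄ / (3W̄² + 1)³`. Differentiating that once more and
evaluating at `W̄(0) = 0` yields the values `0, -1, 0, 6`.
-/

/-- The stable self-similar Burgers profile. -/
noncomputable def burgersW (y : ℝ) : ℝ :=
  (-(y / 2) + Real.sqrt (1 / 27 + y ^ 2 / 4)) ^ ((1 : ℝ) / 3)
    - (y / 2 + Real.sqrt (1 / 27 + y ^ 2 / 4)) ^ ((1 : ℝ) / 3)

open Real ContDiff

theorem contDiff_infty_of_deriv_eq_comp {𝕜 F : Type*} [NontriviallyNormedField 𝕜]
    [NormedAddCommGroup F] [NormedSpace 𝕜 F] {f : 𝕜 → F} {φ : F → F}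
    (hf : Differentiable 𝕜 f) (hφ : ContDiff 𝕜 ∞ φ) (hderiv : deriv f = φ ∘ f) :
    ContDiff 𝕜 ∞ f := by
  refine contDiff_infty.2 fun n => ?_
  induction n with
  | zero => exact contDiff_zero.2 hf.continuous
  | succ n ih =>
    refine (contDiff_succ_iff_deriv (n := n)).2 ⟨hf, by simp, ?_⟩
    rw [hderiv]
    exact (hφ.of_le (by exact_mod_cast le_top)).comp ih

/-- Cardano: the two cube roots `u, v` in the definition satisfy `u³ - v³ = -y` and `u v = 1/3`,
hence `(u - v)³ + (u - v) = -y`. -/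
theorem burgersW_cubic (y : ℝ) : burgersW y ^ 3 + burgersW y + y = 0 := by
  set s := √(1 / 27 + y ^ 2 / 4)
  have hs : s ^ 2 = 1 / 27 + y ^ 2 / 4 := sq_sqrt (by positivity)
  have hs_nonneg : 0 ≤ s := sqrt_nonneg _
  have ha : 0 ≤ -(y / 2) + s := by nlinarith
  have hb : 0 ≤ y / 2 + s := by nlinarith
  have cube_root_pow {x : ℝ} (hx : 0 ≤ x) : (x ^ ((1 : ℝ) / 3)) ^ 3 = x := by
    rw [one_div]; exact_mod_cast rpow_inv_natCast_pow hx three_ne_zero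
  have hprod : (-(y / 2) + s) ^ ((1 : ℝ) / 3) * (y / 2 + s) ^ ((1 : ℝ) / 3) = 1 / 3 := by
    rw [← mul_rpow ha hb, show (-(y / 2) + s) * (y / 2 + s) = (1 / 3) ^ 3 by nlinarith, one_div 3,
      ← Nat.cast_ofNat, pow_rpow_inv_natCast (by norm_num) three_ne_zero]
  unfold burgersW
  linear_combination cube_root_pow ha - cube_root_pow hb
    - 3 * ((-(y / 2) + s) ^ ((1 : ℝ) / 3) - (y / 2 + s) ^ ((1 : ℝ) / 3)) * hprod

theorem burgersW_zero : burgersW 0 = 0 := by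
  have h : burgersW 0 * (burgersW 0 ^ 2 + 1) = 0 := by linear_combination burgersW_cubic 0
  exact (mul_eq_zero.1 h).resolve_right (by positivity)

theorem continuous_burgersW : Continuous burgersW := by
  unfold burgersW
  have := continuous_rpow_const (q := 1 / 3) (by norm_num)
  fun_prop

theorem hasDerivAt_burgersW (y : ℝ) :
    HasDerivAt burgersW (-(3 * burgersW y ^ 2 + 1))⁻¹ y := by
  have hpoly : HasDerivAt (fun w : ℝ => -(w ^ 3 + w)) (-(3 * burgersW y ^ 2 + 1)) (burgersW y) :=
    ((hasDerivAt_pow 3 _).add (hasDerivAt_id' _)).neg.congr_deriv (by norm_num)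
  refine hpoly.of_local_left_inverse continuous_burgersW.continuousAt
    (neg_ne_zero.2 (by positivity)) (Filter.Eventually.of_forall fun z => ?_)
  linear_combination -burgersW_cubic z

theorem deriv_burgersW : deriv burgersW = fun y => -(3 * burgersW y ^ 2 + 1)⁻¹ := by
  funext y
  rw [(hasDerivAt_burgersW y).deriv, neg_inv]

theorem contDiff_burgersW : ContDiff ℝ ∞ burgersW :=
  contDiff_infty_of_deriv_eq_comp (φ := fun w => -(3 * w ^ 2 + 1)⁻¹)
    (fun y => (hasDerivAt_burgersW y).differentiableAt)
    (by fun_prop (disch := intro; positivity)) deriv_burgersW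

theorem hasDerivAt_three_mul_burgersW_sq_add_one (y : ℝ) :
    HasDerivAt (fun z => 3 * burgersW z ^ 2 + 1)
      (-6 * burgersW y / (3 * burgersW y ^ 2 + 1)) y := by
  have hq : 3 * burgersW y ^ 2 + 1 ≠ 0 := by positivity
  refine ((((hasDerivAt_burgersW y).pow 2).const_mul 3).add_const 1).congr_deriv ?_
  field_simp
  ring

theorem deriv_deriv_burgersW :
    deriv (deriv burgersW) = fun y => -6 * burgersW y / (3 * burgersW y ^ 2 + 1) ^ 3 := by
  funext y
  have hq : 3 * burgersW y ^ 2 + 1 ≠ 0 := by positivity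
  have h : HasDerivAt (fun z => -(3 * burgersW z ^ 2 + 1)⁻¹) _ y :=
    ((hasDerivAt_three_mul_burgersW_sq_add_one y).inv hq).neg
  rw [deriv_burgersW, h.deriv]
  field_simp

/-- `W̄` is smooth near `0`, and its iterated derivatives at the origin satisfy
`W̄(0) = 0`, `W̄'(0) = -1`, `W̄''(0) = 0`, `W̄'''(0) = 6`. -/
theorem burgersW_derivs_at_zero :
    ContDiffAt ℝ (⊤ : ℕ∞) burgersW 0 ∧
      burgersW 0 = 0 ∧
      iteratedDeriv 1 burgersW 0 = -1 ∧
      iteratedDeriv 2 burgersW 0 = 0 ∧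
      iteratedDeriv 3 burgersW 0 = 6 := by
  have hderiv3 : HasDerivAt (fun y => -6 * burgersW y / (3 * burgersW y ^ 2 + 1) ^ 3) 6 0 := by
    have h : HasDerivAt (fun y => -6 * burgersW y / (3 * burgersW y ^ 2 + 1) ^ 3) _ 0 :=
      ((hasDerivAt_burgersW 0).const_mul (-6)).div
        ((hasDerivAt_three_mul_burgersW_sq_add_one 0).pow 3) (by positivity)
    convert h using 1
    simp [burgersW_zero]
  refine ⟨contDiff_burgersW.contDiffAt, burgersW_zero, ?_, ?_, ?_⟩
  · simp [deriv_burgersW, burgersW_zero]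
  · simp [iteratedDeriv_succ, deriv_deriv_burgersW, burgersW_zero]
  · rw [iteratedDeriv_succ, iteratedDeriv_succ, iteratedDeriv_one, deriv_deriv_burgersW,
      hderiv3.deriv]
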